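/- arXiv:math/0310219 — 2 statements merged into one kernel-verified Lean document; each statement's English description precedes it below -/
import Mathlib

section
/- Let γ, d, m, b, c be positive integers with γ even, and set n = b·c and v = γd²/2 + 1 - n·m(m+1)/2. If v ≥ -1, then there exists a natural number k such that γd²/2 + 1 - b·k(k+1)/2 ≥ -1 and k(k+3)/2 - c·m(m+1)/2 ≥ -1. -/
/-- Lemma 4.4: if the virtual dimension `v` of `L^γ(d, m^n)` (with `n = b·c`) is at
least `-1`, there is a twisting parameter `k` with `v_S ≥ -1` and `v_P ≥ -1`. -/
theorem stmt3 (γ d m b c : ℕ)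
    (hγ : 0 < γ) (hd : 0 < d) (hm : 0 < m) (hb : 0 < b) (hc : 0 < c)
    (hγe : Even γ) (n : ℕ) (hn : n = b * c)
    (v : ℚ) (hv : v = (γ : ℚ) * d ^ 2 / 2 + 1 - n * (m * (m + 1)) / 2)
    (hge : v ≥ -1) :
    ∃ k : ℕ, (γ : ℚ) * d ^ 2 / 2 + 1 - b * (k * (k + 1)) / 2 ≥ -1 ∧
      (k : ℚ) * (k + 3) / 2 - c * (m * (m + 1)) / 2 ≥ -1 := by
  set N : ℕ := c * (m * (m + 1)) with hN
  have hN2 : 2 ≤ N := by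
    have : 1 * (1 * (1 + 1)) ≤ c * (m * (m + 1)) := by
      apply Nat.mul_le_mul hc
      apply Nat.mul_le_mul hm
      omega
    omega
  set P : ℕ → Prop := fun k => k * (k + 1) ≤ N with hP
  have hdec : DecidablePred P := fun k => by unfold P; infer_instance
  set k : ℕ := Nat.findGreatest P N with hk
  have hP0 : P 0 := by simp [hP]
  have hspec : P k := Nat.findGreatest_spec (Nat.zero_le N) hP0
  have hkle : k ≤ N := Nat.findGreatest_le N
  have hkltN : k < N := by
    rcases Nat.lt_or_ge k N with h | h
    · exact h
    · exfalso
      have : k = N := le_antisymm hkle h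
      rw [this] at hspec
      unfold P at hspec
      nlinarith
  have hmax : ¬ P (k + 1) :=
    Nat.findGreatest_is_greatest (Nat.lt_succ_self k) (by omega)
  have h1 : k * (k + 1) ≤ N := hspec
  have h2 : N < (k + 1) * (k + 1 + 1) := by
    unfold P at hmax
    exact Nat.lt_of_not_le hmax
  have h3 : N ≤ k * (k + 3) + 2 := by nlinarith
  refine ⟨k, ?_, ?_⟩
  · have hb1 : (b : ℚ) * (k * (k + 1)) ≤ n * (m * (m + 1)) := by
      have : (b * (k * (k + 1)) : ℕ) ≤ n * (m * (m + 1)) := by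
        rw [hn]
        calc b * (k * (k + 1)) ≤ b * N := Nat.mul_le_mul_left b h1
        _ = b * c * (m * (m + 1)) := by rw [hN]; ring
      exact_mod_cast this
    rw [hv] at hge
    linarith
  · have hq : (N : ℚ) ≤ k * (k + 3) + 2 := by exact_mod_cast h3
    have : (N : ℚ) = c * (m * (m + 1)) := by push_cast [hN]; ring
    rw [this] at hq
    linarith
end

section
/- Let γ, d, m, b, c be positive integers with γ even, and set n = b·c and v = γd²/2 + 1 - n·m(m+1)/2. If v ≤ -1, then there exists a natural number k such that γd²/2 + 1 - b·(k+1)(k+2)/2 ≤ -1 and (k-1)(k+2)/2 - c·m(m+1)/2 ≤ -1. -/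
/-- Lemma 4.6: if the virtual dimension `v` of `L^γ(d, m^n)` (with `n = b·c`) is at
most `-1`, there is a twisting parameter `k` with `v̂_S ≤ -1` and `v̂_P ≤ -1`. -/
theorem stmt4 (γ d m b c : ℕ)
    (hγ : 0 < γ) (hd : 0 < d) (hm : 0 < m) (hb : 0 < b) (hc : 0 < c)
    (hγe : Even γ) (n : ℕ) (hn : n = b * c)
    (v : ℚ) (hv : v = (γ : ℚ) * d ^ 2 / 2 + 1 - n * (m * (m + 1)) / 2)
    (hle : v ≤ -1) :
    ∃ k : ℕ, (γ : ℚ) * d ^ 2 / 2 + 1 - b * ((k + 1) * (k + 2)) / 2 ≤ -1 ∧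
      ((k : ℚ) - 1) * (k + 2) / 2 - c * (m * (m + 1)) / 2 ≤ -1 := by
  set N := c * (m * (m + 1)) with hN
  have hex : ∃ k : ℕ, N ≤ (k + 1) * (k + 2) := ⟨N, by nlinarith⟩
  classical
  set k := Nat.find hex with hkdef
  have hk1 : N ≤ (k + 1) * (k + 2) := Nat.find_spec hex
  -- from hle: γd² + 4 ≤ b * N  (as naturals / rationals)
  have hlev : (γ : ℚ) * d ^ 2 + 4 ≤ (b : ℚ) * N := by
    have hNq : (N : ℚ) = (c : ℚ) * (m * (m + 1)) := by rw [hN]; push_cast; ring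
    rw [hv, hn] at hle
    push_cast at hle
    rw [hNq]
    linarith
  have hk1q : (N : ℚ) ≤ ((k : ℚ) + 1) * (k + 2) := by exact_mod_cast hk1
  refine ⟨k, ?_, ?_⟩
  · have hbq : (1 : ℚ) ≤ (b : ℚ) := by exact_mod_cast hb
    have hNq : (0 : ℚ) ≤ (N : ℚ) := by positivity
    nlinarith [hlev, hk1q, hbq]
  · have hNq : (N : ℚ) = (c : ℚ) * (m * (m + 1)) := by rw [hN]; push_cast; ring
    rw [← hNq]
    rcases Nat.eq_zero_or_pos k with hk0 | hkpos
    · have : (0 : ℚ) ≤ (N : ℚ) := by positivity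
      rw [hk0]
      push_cast
      linarith
    · obtain ⟨j, hkj⟩ : ∃ j, k = j + 1 := ⟨k - 1, by omega⟩
      have hmin : ¬ N ≤ (j + 1) * (j + 2) :=
        Nat.find_min hex (by omega)
      have h2 : (j + 1) * (j + 2) + 1 ≤ N := by omega
      have h2q : ((j : ℚ) + 1) * (j + 2) + 1 ≤ (N : ℚ) := by exact_mod_cast h2
      have hkq : (k : ℚ) = (j : ℚ) + 1 := by exact_mod_cast hkj
      nlinarith [h2q, hkq]
end
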